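/- Let G be a finite, connected, simple graph on vertex set V with diameter D, let S : V → {A,B} partition V into two nonempty groups V_A and V_B, and let h : V → {0,1} be non-degenerate (0 < Σ_k h(k) < |V|). Then for every integer d ≥ D and each group s ∈ {A,B}, the group-level perceived fairness Vis_d(s;h) = (1/|V_s|) Σ_{i ∈ V_s} F^(d)(i;h) equals the group acceptance rate (1/|V_s|) Σ_{i ∈ V_s} h(i). In particular, if demographic parity holds, i.e., (1/|V_A|) Σ_{i ∈ V_A} h(i) = (1/|V_B|) Σ_{i ∈ V_B} h(i), then the perceived fairness gap Δ_d(h) = Vis_d(A;h) − Vis_d(B;h) equals 0 for all d ≥ D. -/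

import Mathlib

/-- The `d`-hop neighborhood `N^(d)(i)`: vertices at graph distance at most `d` from `i`. -/
def hopNbhd {V : Type*} [Fintype V] (G : SimpleGraph V)
    [∀ i d, DecidablePred fun j : V => G.dist i j ≤ d] (i : V) (d : ℕ) : Finset V :=
  Finset.univ.filter (fun j => G.dist i j ≤ d)

/-- The `d`-neighborhood peer expectation `E_i^(d)[h]`. -/
noncomputable def peerExp {V : Type*} [Fintype V] (G : SimpleGraph V)
    [∀ i d, DecidablePred fun j : V => G.dist i j ≤ d] (i : V) (d : ℕ) (h : V → ℝ) : ℝ :=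
  (∑ j ∈ hopNbhd G i d, h j) / ((hopNbhd G i d).card : ℝ)

/-- The fairness perception indicator `F^(d)(i;h) = 1{E_i^(d)[h] ≤ h(i)}`. -/
noncomputable def perception {V : Type*} [Fintype V] (G : SimpleGraph V)
    [∀ i d, DecidablePred fun j : V => G.dist i j ≤ d] (i : V) (d : ℕ) (h : V → ℝ) : ℝ :=
  if peerExp G i d h ≤ h i then 1 else 0

/-- The group `V_s` of a two-group labeling `S : V → Bool`. -/
def groupSet {V : Type*} [Fintype V] [DecidableEq V] (S : V → Bool) (s : Bool) : Finset V :=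
  Finset.univ.filter (fun i => S i = s)

/-- Group-level perceived fairness `Vis_d(s;h)`. -/
noncomputable def Vis {V : Type*} [Fintype V] [DecidableEq V] (G : SimpleGraph V)
    [∀ i d, DecidablePred fun j : V => G.dist i j ≤ d]
    (S : V → Bool) (d : ℕ) (s : Bool) (h : V → ℝ) : ℝ :=
  (∑ i ∈ groupSet S s, perception G i d h) / ((groupSet S s).card : ℝ)

/-! Once `d` reaches the diameter, every `d`-hop neighbourhood is all of `V`, so every peer
expectation is the global acceptance rate `p`, and non-degeneracy puts `p` strictly between
`0` and `1`. Hence `F^(d)(i;h) = 1{p ≤ h(i)} = h(i)` for a binary `h`, node by node. -/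

section Perception

variable {V : Type*} [Fintype V] (G : SimpleGraph V)
  [∀ i d, DecidablePred fun j : V => G.dist i j ≤ d]

theorem hopNbhd_eq_univ {i : V} {d : ℕ} (hi : ∀ j, G.dist i j ≤ d) :
    hopNbhd G i d = Finset.univ :=
  Finset.filter_true_of_mem fun j _ => hi j

theorem peerExp_eq_mean {i : V} {d : ℕ} (hi : ∀ j, G.dist i j ≤ d) (h : V → ℝ) :
    peerExp G i d h = (∑ k, h k) / (Fintype.card V : ℝ) := by
  rw [peerExp, hopNbhd_eq_univ G hi, Finset.card_univ]

theorem perception_eq_self {i : V} {d : ℕ} {h : V → ℝ} (hbin : h i = 0 ∨ h i = 1)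
    (hE : peerExp G i d h ∈ Set.Ioo 0 1) : perception G i d h = h i := by
  rcases hbin with h0 | h1
  · rw [perception, if_neg (by rw [h0]; exact not_le.2 hE.1), h0]
  · rw [perception, if_pos (by rw [h1]; exact hE.2.le), h1]

theorem Vis_eq_acceptance_rate [DecidableEq V] {S : V → Bool} {d : ℕ} {s : Bool} {h : V → ℝ}
    (hF : ∀ i ∈ groupSet S s, perception G i d h = h i) :
    Vis G S d s h = (∑ i ∈ groupSet S s, h i) / ((groupSet S s).card : ℝ) := by
  rw [Vis, Finset.sum_congr rfl hF]

end Perception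

/-- for a connected graph of diameter `D`, two nonempty groups, and a
non-degenerate binary rule `h`, for every `d ≥ D` the group-level perceived fairness
equals the group acceptance rate; in particular demographic parity implies that the
perceived fairness gap `Δ_d(h)` is zero for all `d ≥ D`. -/
theorem stmt_2 {V : Type*} [Fintype V] [DecidableEq V] (G : SimpleGraph V)
    [∀ i d, DecidablePred fun j : V => G.dist i j ≤ d]
    (hconn : G.Connected) (D : ℕ) (hD : ∀ i j : V, G.dist i j ≤ D)
    (S : V → Bool) (hA : (groupSet S true).Nonempty) (hB : (groupSet S false).Nonempty)
    (h : V → ℝ) (hbin : ∀ i, h i = 0 ∨ h i = 1)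
    (hnd : 0 < ∑ k, h k ∧ ∑ k, h k < (Fintype.card V : ℝ)) :
    (∀ d : ℕ, D ≤ d → ∀ s : Bool,
        Vis G S d s h = (∑ i ∈ groupSet S s, h i) / ((groupSet S s).card : ℝ)) ∧
    ((∑ i ∈ groupSet S true, h i) / ((groupSet S true).card : ℝ)
        = (∑ i ∈ groupSet S false, h i) / ((groupSet S false).card : ℝ) →
      ∀ d : ℕ, D ≤ d → Vis G S d true h - Vis G S d false h = 0) := by
  have hcard : (0 : ℝ) < Fintype.card V := hnd.1.trans hnd.2
  have hmean : (∑ k, h k) / (Fintype.card V : ℝ) ∈ Set.Ioo 0 1 :=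
    ⟨div_pos hnd.1 hcard, (div_lt_one hcard).2 hnd.2⟩
  have hvis : ∀ d : ℕ, D ≤ d → ∀ s : Bool,
      Vis G S d s h = (∑ i ∈ groupSet S s, h i) / ((groupSet S s).card : ℝ) :=
    fun d hd s => Vis_eq_acceptance_rate G fun i _ => perception_eq_self G (hbin i)
      (peerExp_eq_mean G (fun j => (hD i j).trans hd) h ▸ hmean)
  refine ⟨hvis, fun hparity d hd => ?_⟩
  rw [hvis d hd true, hvis d hd false, hparity, sub_self]
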